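/- arXiv:2202.10147 — 3 statements merged into one kernel-verified Lean document; each statement's English description precedes it below -/
import Mathlib

section
/- A monomial ideal I generated in a single degree has linear quotients if and only if there is an ordering u₁,...,u_k of G(I) such that the ideal (u₁,...,u_i) has a linear resolution for each i = 1,...,k. -/
open MvPolynomial

/-- The monomial `x^u` in the polynomial ring `K[x_i : i ∈ σ]`. -/
noncomputable def mon (K : Type) [Field K] {σ : Type} (u : σ →₀ ℕ) :
    MvPolynomial σ K := MvPolynomial.monomial u 1

/-- Total degree of an exponent vector. -/
def mdeg {σ : Type} (u : σ →₀ ℕ) : ℕ := u.sum fun _ e => e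

/-- The monomial ideal generated by the monomials with exponent vectors in `S`. -/
noncomputable def monIdeal (K : Type) [Field K] {σ : Type} (S : Set (σ →₀ ℕ)) :
    Ideal (MvPolynomial σ K) := Ideal.span ((mon K) '' S)

/-- An ideal is generated by variables. -/
def genByVars {K : Type} [Field K] {σ : Type} (J : Ideal (MvPolynomial σ K)) : Prop :=
  ∃ A : Set σ, J = Ideal.span ((fun i => (X i : MvPolynomial σ K)) '' A)

/-- An ideal is generated by linear forms. -/
def genByLinForms {K : Type} [Field K] {σ : Type} (J : Ideal (MvPolynomial σ K)) : Prop :=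
  ∃ S : Set (MvPolynomial σ K), (∀ f ∈ S, f.IsHomogeneous 1) ∧ J = Ideal.span S

/-- `S` is an antichain under divisibility of monomials, i.e. it is the minimal
monomial generating set `G(I)` of the monomial ideal `I` it generates. -/
def IsMinGenSet {σ : Type} (S : Set (σ →₀ ℕ)) : Prop :=
  ∀ u ∈ S, ∀ v ∈ S, u ≤ v → u = v

/-- A monomial ideal, presented by its minimal monomial generating set `S`, is
quasi-linear if for every `u ∈ S` the colon ideal `(G(I) \ {u}) : u` is generated
by variables. -/
def QuasiLinear (K : Type) [Field K] {σ : Type} (S : Set (σ →₀ ℕ)) : Prop :=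
  ∀ u ∈ S, genByVars (Submodule.colon (monIdeal K (S \ {u})) (Ideal.span {mon K u}))

/-- A minimal graded free resolution of an ideal `I` in a polynomial ring:
graded free modules `F i = ⊕_k R(-dg i k)` of rank `b i`, differentials
`F (i+1) → F i` given by the matrices `A i`, whose entries are homogeneous of the
appropriate degree and of positive degree (this is minimality, i.e. all entries lie
in the graded maximal ideal), together with an augmentation `F 0 → I` given by the
homogeneous generators `g`, everything being exact. -/
structure MinFreeRes {K : Type} [Field K] {σ : Type} (I : Ideal (MvPolynomial σ K)) where
  b : ℕ → ℕ
  dg : (i : ℕ) → Fin (b i) → ℕ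
  g : Fin (b 0) → MvPolynomial σ K
  A : (i : ℕ) → Matrix (Fin (b i)) (Fin (b (i+1))) (MvPolynomial σ K)
  g_hom : ∀ k, (g k).IsHomogeneous (dg 0 k)
  A_hom : ∀ i k l, A i k l = 0 ∨
    ((A i k l).IsHomogeneous (dg (i+1) l - dg i k) ∧ dg i k < dg (i+1) l)
  aug_range : LinearMap.range (Fintype.linearCombination (MvPolynomial σ K)
      g) = I
  aug_exact : LinearMap.ker (Fintype.linearCombination (MvPolynomial σ K)
      g) = LinearMap.range ((A 0).mulVecLin)
  is_exact : ∀ i, LinearMap.ker ((A i).mulVecLin) = LinearMap.range ((A (i+1)).mulVecLin)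

/-- The graded Betti number `β_{i,j}` read off from a minimal graded free resolution:
the number of generators of the `i`-th free module of degree `j`. -/
noncomputable def MinFreeRes.beta {K : Type} [Field K] {σ : Type}
    {I : Ideal (MvPolynomial σ K)} (res : MinFreeRes I) (i j : ℕ) : ℕ :=
  (Finset.univ.filter fun k => res.dg i k = j).card

/-- `I` has a `d`-linear resolution: it has a minimal graded free resolution in which the
`i`-th free module is generated entirely in degree `i + d`, i.e. `β_{i,j}(I) = 0`
whenever `j - i ≠ d`. -/
def HasLinRes {K : Type} [Field K] {σ : Type} (I : Ideal (MvPolynomial σ K))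
    (d : ℕ) : Prop :=
  ∃ res : MinFreeRes I, ∀ i k, res.dg i k = i + d

/-- `reg I ≤ r`: a minimal graded free resolution of `I` has all generators of the
`i`-th free module in degrees `≤ i + r`, i.e. `β_{i,j}(I) = 0` whenever `j - i > r`. -/
def RegLE {K : Type} [Field K] {σ : Type} (I : Ideal (MvPolynomial σ K)) (r : ℕ) : Prop :=
  ∃ res : MinFreeRes I, ∀ i k, res.dg i k ≤ i + r


/-!
(⇒) Suppose `J = (u₁, …, uᵢ₋₁)` has a `d`-linear resolution and `J : uᵢ` is generated by
variables. An ideal generated by variables has a `1`-linear resolution (by the same construction,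
adding one variable at a time), and the mapping cone of a comparison map that lifts multiplication
by `uᵢ : R ⧸ (J : uᵢ) → R ⧸ J` is a `d`-linear resolution of `J + (uᵢ)`; induct on `i`.

(⇐) If `(u₁, …, uᵢ)` has a linear resolution, its generators have degree `d` and their syzygies
are generated by linear ones. The `uⱼ` are linearly independent of the same degree, so they differ
from those generators by an invertible scalar matrix and inherit this property. The colon ideal
`(u₁, …, uᵢ₋₁) : uᵢ` is the set of `i`-th coordinates of syzygies of `u₁, …, uᵢ`, hence is generated
by linear forms; being a monomial ideal, it is then generated by variables.
-/

open Matrix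

section Homogeneous

variable {K σ ι κ : Type} [CommRing K]

attribute [local instance] MvPolynomial.gradedAlgebra in
theorem MvPolynomial.homogeneousComponent_mul_of_isHomogeneous {p g : MvPolynomial σ K} {e : ℕ}
    (hg : g.IsHomogeneous e) (n : ℕ) :
    homogeneousComponent n (p * g) =
      if e ≤ n then homogeneousComponent (n - e) p * g else 0 := by
  rw [← decomposition.decompose'_apply, ← decomposition.decompose'_apply]
  exact DirectSum.coe_decompose_mul_of_right_mem (homogeneousSubmodule σ K) n hg

theorem MvPolynomial.homogeneousComponent_eq_zero_of_mem_span {S : Set (MvPolynomial σ K)}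
    {d : ℕ} (hS : ∀ f ∈ S, f.IsHomogeneous d) {p : MvPolynomial σ K} (hp : p ∈ Ideal.span S)
    {m : ℕ} (hm : m < d) : homogeneousComponent m p = 0 := by
  obtain ⟨l, r, f, rfl⟩ := Submodule.mem_span_set'.1 hp
  simp only [smul_eq_mul, map_sum,
    homogeneousComponent_mul_of_isHomogeneous (hS _ (f _).2), if_neg (not_le.2 hm),
    Finset.sum_const_zero]

theorem MvPolynomial.IsHomogeneous.le_of_mem_span {S : Set (MvPolynomial σ K)} {d e : ℕ}
    (hS : ∀ f ∈ S, f.IsHomogeneous d) {p : MvPolynomial σ K} (hpe : p.IsHomogeneous e)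
    (hp : p ∈ Ideal.span S) (hp0 : p ≠ 0) : d ≤ e := by
  by_contra! h
  exact hp0 (homogeneousComponent_eq_self hpe ▸ homogeneousComponent_eq_zero_of_mem_span hS hp h)

theorem MvPolynomial.eq_of_isHomogeneous_of_span_eq {f : ι → MvPolynomial σ K}
    {g : κ → MvPolynomial σ K} {d e : ℕ} (hf : ∀ t, (f t).IsHomogeneous d)
    (hg : ∀ j, (g j).IsHomogeneous e) (hspan : Ideal.span (Set.range f) = Ideal.span (Set.range g))
    {t : ι} (ht : f t ≠ 0) : d = e := by
  obtain ⟨j, hj⟩ : ∃ j, g j ≠ 0 := by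
    by_contra! hg₀
    refine ht (Ideal.span_eq_bot.1 ?_ _ (Set.mem_range_self t))
    rw [hspan, Ideal.span_eq_bot, Set.forall_mem_range]
    exact hg₀
  exact le_antisymm
    ((hg j).le_of_mem_span (Set.forall_mem_range.2 hf) (hspan ▸ Ideal.subset_span ⟨j, rfl⟩) hj)
    ((hf t).le_of_mem_span (Set.forall_mem_range.2 hg) (hspan.symm ▸ Ideal.subset_span ⟨t, rfl⟩)
      ht)

theorem MvPolynomial.exists_sum_C_mul_eq [Fintype ι] {f : ι → MvPolynomial σ K} {d : ℕ}
    (hf : ∀ t, (f t).IsHomogeneous d) {p : MvPolynomial σ K} (hp : p ∈ Ideal.span (Set.range f))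
    (hpd : p.IsHomogeneous d) : ∃ c : ι → K, ∑ t, C (c t) * f t = p := by
  obtain ⟨v, rfl⟩ := Ideal.mem_span_range_iff_exists_fun.1 hp
  refine ⟨fun t => coeff 0 (v t), ?_⟩
  rw [← homogeneousComponent_eq_self hpd, map_sum]
  simp [homogeneousComponent_mul_of_isHomogeneous (hf _)]

end Homogeneous

theorem mon_isHomogeneous {K σ : Type} [Field K] (u : σ →₀ ℕ) :
    (mon K u).IsHomogeneous (mdeg u) :=
  isHomogeneous_monomial _ rfl

namespace Matrix

variable {K σ : Type} [CommRing K] {α β γ : Type}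

def IsHomogeneous (M : Matrix α β (MvPolynomial σ K)) (e : ℕ) : Prop :=
  ∀ i j, (M i j).IsHomogeneous e

variable [Fintype β] {M : Matrix α β (MvPolynomial σ K)} {e : ℕ}

theorem IsHomogeneous.mul {N : Matrix β γ (MvPolynomial σ K)} {e' : ℕ} (hM : M.IsHomogeneous e)
    (hN : N.IsHomogeneous e') : (M * N).IsHomogeneous (e + e') := fun i j =>
  MvPolynomial.IsHomogeneous.sum _ _ _ fun k _ => (hM i k).mul (hN k j)

theorem IsHomogeneous.mul_map_homogeneousComponent (hM : M.IsHomogeneous e)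
    (X : Matrix β γ (MvPolynomial σ K)) (m : ℕ) :
    M * X.map (MvPolynomial.homogeneousComponent m) =
      (M * X).map (MvPolynomial.homogeneousComponent (m + e)) := by
  ext i j
  simp only [mul_apply, map_apply, map_sum, mul_comm (M i _),
    MvPolynomial.homogeneousComponent_mul_of_isHomogeneous (hM i _),
    if_pos (Nat.le_add_left e m), Nat.add_sub_cancel]

theorem IsHomogeneous.exists_isHomogeneous_mul_eq (hM : M.IsHomogeneous e) {m : ℕ}
    {Y : Matrix α γ (MvPolynomial σ K)} (hY : Y.IsHomogeneous (m + e))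
    (h : ∃ X : Matrix β γ (MvPolynomial σ K), M * X = Y) :
    ∃ X : Matrix β γ (MvPolynomial σ K), M * X = Y ∧ X.IsHomogeneous m := by
  obtain ⟨X, rfl⟩ := h
  refine ⟨X.map (MvPolynomial.homogeneousComponent m), ?_,
    fun _ _ => MvPolynomial.homogeneousComponent_isHomogeneous _ _⟩
  rw [hM.mul_map_homogeneousComponent]
  ext1 i j
  exact MvPolynomial.homogeneousComponent_eq_self (hY i j)

end Matrix

section Exact

variable {R : Type} [CommRing R] {α β γ δ : Type} [Fintype β] [Fintype γ]

theorem Matrix.exists_mul_eq_of_forall_mem_range {M : Matrix α β R} {Y : Matrix α δ R}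
    (h : ∀ j, (fun i => Y i j) ∈ Set.range M.mulVec) : ∃ X : Matrix β δ R, M * X = Y := by
  choose X hX using h
  exact ⟨of fun k j => X j k, ext fun i j => congrFun (hX j) i⟩

theorem Matrix.exact_mulVec_of_mul_eq_zero {M : Matrix α β R} {N : Matrix β γ R}
    (h₀ : M * N = 0) (h : ∀ y, M *ᵥ y = 0 → y ∈ Set.range N.mulVec) :
    Function.Exact N.mulVec M.mulVec :=
  fun y => ⟨h y, by rintro ⟨w, rfl⟩; rw [mulVec_mulVec, h₀, zero_mulVec]⟩

theorem Function.Exact.matrix_mul_eq_zero {M : Matrix α β R} {N : Matrix β γ R}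
    (h : Function.Exact N.mulVec M.mulVec) : M * N = 0 := by
  classical
  ext i j
  have := congrFun (h.apply_apply_eq_zero (Pi.single j 1)) i
  rwa [mulVec_mulVec, mulVec_single_one] at this

theorem Function.Exact.exists_matrix_mul_eq {M : Matrix α β R} {N : Matrix β γ R}
    (h : Function.Exact N.mulVec M.mulVec) {Y : Matrix β δ R} (hY : M * Y = 0) :
    ∃ X : Matrix γ δ R, N * X = Y :=
  exists_mul_eq_of_forall_mem_range fun j => (h _).1 (funext fun i => congrFun₂ hY i j)

theorem Function.Exact.matrix_submatrix {α' β' γ' : Type} [Fintype β'] [Fintype γ']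
    {M : Matrix α β R} {N : Matrix β γ R} (h : Function.Exact N.mulVec M.mulVec)
    (ea : α' ≃ α) (eb : β' ≃ β) (ec : γ' ≃ γ) :
    Function.Exact (N.submatrix eb ec).mulVec (M.submatrix ea eb).mulVec := by
  intro y
  have hcomp (f : α → R) : f ∘ ea = 0 ↔ f = 0 :=
    ⟨fun hf => funext fun a => by simpa using congrFun hf (ea.symm a), fun hf => hf ▸ rfl⟩
  rw [submatrix_mulVec_equiv, hcomp, h]
  constructor
  · rintro ⟨z, hz⟩
    exact ⟨z ∘ ec, by rw [submatrix_mulVec_equiv, Function.comp_assoc, ec.self_comp_symm,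
      Function.comp_id, hz, Function.comp_assoc, eb.symm_comp_self, Function.comp_id]⟩
  · rintro ⟨z, rfl⟩
    exact ⟨z ∘ ec.symm, by rw [submatrix_mulVec_equiv, Function.comp_assoc,
      eb.self_comp_symm, Function.comp_id]⟩

variable {κ₀ κ₁ κ₂ : Type} [Fintype κ₁] [Fintype κ₂] {P₁ : Matrix α β R} {P₂ : Matrix β γ R}
  {Ψ₁ : Matrix α κ₁ R} {Ψ₂ : Matrix β κ₂ R} {Q₀ : Matrix κ₀ κ₁ R} {Q₁ : Matrix κ₁ κ₂ R}

theorem Matrix.exists_fromBlocks_mulVec_eq (hP : Function.Exact P₂.mulVec P₁.mulVec)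
    (hΨ : P₁ * Ψ₂ = Ψ₁ * Q₁) {x : β → R} {y : κ₁ → R} (hxy : P₁ *ᵥ x + Ψ₁ *ᵥ y = 0)
    (hy : y ∈ Set.range Q₁.mulVec) : ∃ z, fromBlocks P₂ Ψ₂ 0 (-Q₁) *ᵥ z = Sum.elim x y := by
  obtain ⟨y', rfl⟩ := hy
  obtain ⟨x', hx'⟩ := (hP (x + Ψ₂ *ᵥ y')).1 (by
    rw [mulVec_add, mulVec_mulVec, hΨ, ← mulVec_mulVec, hxy])
  refine ⟨Sum.elim x' (-y'), ?_⟩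
  simp [fromBlocks_mulVec, hx', mulVec_neg, neg_mulVec]

/-- Exactness of the mapping cone of `Ψ` at its first two terms; `hQ` says that `Ψ` is injective
on the cokernels of `Q₁` and `P₁`. -/
theorem Matrix.exact_fromCols_fromBlocks (hP : Function.Exact P₂.mulVec P₁.mulVec)
    (hΨ : P₁ * Ψ₂ = Ψ₁ * Q₁)
    (hQ : ∀ y, Ψ₁ *ᵥ y ∈ Set.range P₁.mulVec → y ∈ Set.range Q₁.mulVec) :
    Function.Exact (fromBlocks P₂ Ψ₂ 0 (-Q₁)).mulVec (fromCols P₁ Ψ₁).mulVec := by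
  refine exact_mulVec_of_mul_eq_zero ?_ fun z hz => ?_
  · simp [fromCols_mul_fromBlocks, hP.matrix_mul_eq_zero, hΨ]
  rw [← Sum.elim_comp_inl_inr z, fromCols_mulVec_sumElim] at hz
  rw [← Sum.elim_comp_inl_inr z]
  refine exists_fromBlocks_mulVec_eq hP hΨ hz (hQ _ ⟨-(z ∘ Sum.inl), ?_⟩)
  rwa [mulVec_neg, neg_eq_iff_add_eq_zero]

theorem Matrix.exact_fromBlocks_fromBlocks (hP : Function.Exact P₂.mulVec P₁.mulVec)
    (hΨ : P₁ * Ψ₂ = Ψ₁ * Q₁) (hQ : Function.Exact Q₁.mulVec Q₀.mulVec) :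
    Function.Exact (fromBlocks P₂ Ψ₂ 0 (-Q₁)).mulVec (fromBlocks P₁ Ψ₁ 0 (-Q₀)).mulVec := by
  refine exact_mulVec_of_mul_eq_zero ?_ fun z hz => ?_
  · simp [fromBlocks_multiply, hP.matrix_mul_eq_zero, hQ.matrix_mul_eq_zero, hΨ]
  rw [← Sum.elim_comp_inl_inr z, fromBlocks_mulVec, ← Sum.elim_zero_zero, Sum.elim_eq_iff] at hz
  rw [← Sum.elim_comp_inl_inr z]
  refine exists_fromBlocks_mulVec_eq hP hΨ hz.1 ((hQ _).1 ?_)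
  simpa [neg_mulVec] using hz.2

end Exact

/-- A free resolution `R ← F₀ ← F₁ ← ⋯` of `R ⧸ I` over `R = K[σ]`. The ring `R` itself sits at
level `0`, so the single row of `d 0` lists generators of `I`; these have degree `deg`, and all
higher differentials are linear. -/
structure LinearResolution {K σ : Type} [CommRing K] (I : Ideal (MvPolynomial σ K)) (deg : ℕ) where
  ι : ℕ → Type
  [fintype : ∀ j, Fintype (ι j)]
  [unique : Unique (ι 0)]
  d : ∀ j, Matrix (ι j) (ι (j + 1)) (MvPolynomial σ K)
  isHomogeneous_zero : (d 0).IsHomogeneous deg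
  isHomogeneous_succ : ∀ j, (d (j + 1)).IsHomogeneous 1
  mem_iff : ∀ r, r ∈ I ↔ ∃ v, (d 0 *ᵥ v) default = r
  exact : ∀ j, Function.Exact (d (j + 1)).mulVec (d j).mulVec

attribute [instance] LinearResolution.fintype LinearResolution.unique

namespace LinearResolution

variable {K σ : Type} [CommRing K] {I J C : Ideal (MvPolynomial σ K)} {deg : ℕ}

theorem mem_range_d_zero_iff (P : LinearResolution I deg) (v : P.ι 0 → MvPolynomial σ K) :
    v ∈ Set.range (P.d 0).mulVec ↔ v default ∈ I := by
  rw [P.mem_iff]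
  constructor
  · rintro ⟨w, rfl⟩
    exact ⟨w, rfl⟩
  · rintro ⟨w, hw⟩
    exact ⟨w, funext fun x => by rw [Unique.eq_default x, hw]⟩

theorem isHomogeneous_d (Q : LinearResolution C 1) : ∀ j, (Q.d j).IsHomogeneous 1
  | 0 => Q.isHomogeneous_zero
  | j + 1 => Q.isHomogeneous_succ j

noncomputable def bot (deg : ℕ) : LinearResolution (⊥ : Ideal (MvPolynomial σ K)) deg where
  ι j := Fin (if j = 0 then 1 else 0)
  unique := Fin.instUnique
  d _ := 0
  isHomogeneous_zero _ _ := MvPolynomial.isHomogeneous_zero _ _ _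
  isHomogeneous_succ _ _ _ := MvPolynomial.isHomogeneous_zero _ _ _
  mem_iff r := by simp [eq_comm]
  exact j y := by
    have : IsEmpty (Fin (if j + 1 = 0 then 1 else 0)) := ⟨fun x => absurd x.2 (by simp)⟩
    simp only [Subsingleton.elim y 0, zero_mulVec, true_iff]
    exact ⟨0, zero_mulVec _⟩

section Cone

variable (P : LinearResolution J deg) (Q : LinearResolution C 1)

theorem exists_comparison {u : MvPolynomial σ K} (hu : u.IsHomogeneous deg)
    (huC : ∀ r ∈ C, r * u ∈ J) :
    ∃ ψ : ∀ j, Matrix (P.ι j) (Q.ι j) (MvPolynomial σ K), ψ 0 = of (fun _ _ => u) ∧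
      (∀ j, (ψ (j + 1)).IsHomogeneous 1) ∧ ∀ j, P.d j * ψ (j + 1) = ψ j * Q.d j := by
  classical
  let ψ₀ : Matrix (P.ι 0) (Q.ι 0) (MvPolynomial σ K) := of fun _ _ => u
  have base : ∃ N : Matrix (P.ι 1) (Q.ι 1) (MvPolynomial σ K),
      P.d 0 * N = ψ₀ * Q.d 0 ∧ N.IsHomogeneous 1 := by
    refine P.isHomogeneous_zero.exists_isHomogeneous_mul_eq ?_
      (exists_mul_eq_of_forall_mem_range fun m => ?_)
    · rw [Nat.add_comm 1 deg]
      exact IsHomogeneous.mul (fun _ _ => hu) Q.isHomogeneous_zero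
    · rw [P.mem_range_d_zero_iff]
      simpa [ψ₀, mul_apply, mul_comm u] using
        huC _ ((Q.mem_iff _).2 ⟨Pi.single m 1, by simp⟩)
  have step : ∀ j (M : Matrix (P.ι j) (Q.ι j) (MvPolynomial σ K))
      (N : Matrix (P.ι (j + 1)) (Q.ι (j + 1)) (MvPolynomial σ K)),
      P.d j * N = M * Q.d j → N.IsHomogeneous 1 →
      ∃ N' : Matrix (P.ι (j + 2)) (Q.ι (j + 2)) (MvPolynomial σ K),
        P.d (j + 1) * N' = N * Q.d (j + 1) ∧ N'.IsHomogeneous 1 := by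
    intro j M N hN hNh
    refine (P.isHomogeneous_succ j).exists_isHomogeneous_mul_eq
      (hNh.mul (Q.isHomogeneous_succ j)) ((P.exact j).exists_matrix_mul_eq ?_)
    rw [← Matrix.mul_assoc, hN, Matrix.mul_assoc, (Q.exact j).matrix_mul_eq_zero,
      Matrix.mul_zero]
  let Stage (j : ℕ) := {MN : Matrix (P.ι j) (Q.ι j) (MvPolynomial σ K) ×
      Matrix (P.ι (j + 1)) (Q.ι (j + 1)) (MvPolynomial σ K) //
    P.d j * MN.2 = MN.1 * Q.d j ∧ MN.2.IsHomogeneous 1}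
  let stage (j : ℕ) : Stage j := Nat.rec (motive := Stage)
    ⟨(ψ₀, base.choose), base.choose_spec⟩
    (fun j s => ⟨(s.1.2, (step j _ _ s.2.1 s.2.2).choose),
      (step j _ _ s.2.1 s.2.2).choose_spec⟩) j
  exact ⟨fun j => (stage j).1.1, rfl, fun j => (stage j).2.2, fun j => (stage j).2.1⟩

def coneIndex : ℕ → Type
  | 0 => P.ι 0
  | j + 1 => P.ι (j + 1) ⊕ Q.ι j

instance : ∀ j, Fintype (coneIndex P Q j)
  | 0 => inferInstanceAs (Fintype (P.ι 0))
  | j + 1 => inferInstanceAs (Fintype (P.ι (j + 1) ⊕ Q.ι j))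

noncomputable def coneD (ψ : ∀ j, Matrix (P.ι j) (Q.ι j) (MvPolynomial σ K)) :
    ∀ j, Matrix (coneIndex P Q j) (coneIndex P Q (j + 1)) (MvPolynomial σ K)
  | 0 => fromCols (P.d 0) (ψ 0)
  | j + 1 => fromBlocks (P.d (j + 1)) (ψ (j + 1)) 0 (-Q.d j)

/-- The mapping cone of a comparison map `ψ` lifting multiplication by `u` from `R ⧸ C` to
`R ⧸ J`. -/
noncomputable def cone {u : MvPolynomial σ K} (hu : u.IsHomogeneous deg)
    (ψ : ∀ j, Matrix (P.ι j) (Q.ι j) (MvPolynomial σ K)) (hψ₀ : ψ 0 = of (fun _ _ => u))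
    (hψ : ∀ j, (ψ (j + 1)).IsHomogeneous 1) (hPψ : ∀ j, P.d j * ψ (j + 1) = ψ j * Q.d j)
    (hC : ∀ r, r * u ∈ J → r ∈ C) : LinearResolution (J ⊔ Ideal.span {u}) deg :=
  have hψv (y : Q.ι 0 → MvPolynomial σ K) : ψ 0 *ᵥ y = fun _ => y default * u := by
    ext
    simp [hψ₀, mulVec, dotProduct, mul_comm]
  { ι := coneIndex P Q
    unique := P.unique
    d := coneD P Q ψ
    isHomogeneous_zero := by
      rintro x (y | y)
      · exact P.isHomogeneous_zero x y
      · change (ψ 0 x y).IsHomogeneous deg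
        rw [hψ₀]
        exact hu
    isHomogeneous_succ j := by
      rintro (x | x) (y | y)
      · exact P.isHomogeneous_succ j x y
      · exact hψ j x y
      · exact MvPolynomial.isHomogeneous_zero _ _ _
      · exact (Q.isHomogeneous_d j x y).neg
    mem_iff r := by
      change _ ↔ ∃ v : P.ι 1 ⊕ Q.ι 0 → _, (fromCols (P.d 0) (ψ 0) *ᵥ v) default = r
      simp only [Submodule.mem_sup, Ideal.mem_span_singleton']
      constructor
      · rintro ⟨a, ha, _, ⟨c, rfl⟩, rfl⟩
        obtain ⟨v, rfl⟩ := (P.mem_iff a).1 ha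
        exact ⟨Sum.elim v fun _ => c, by rw [fromCols_mulVec_sumElim, Pi.add_apply, hψv]⟩
      · rintro ⟨v, rfl⟩
        exact ⟨_, (P.mem_iff _).2 ⟨v ∘ Sum.inl, rfl⟩, _, ⟨v (Sum.inr default), rfl⟩,
          by rw [fromCols_mulVec, Pi.add_apply, hψv]; rfl⟩
    exact
      | 0 => exact_fromCols_fromBlocks (P.exact 0) (hPψ 0) fun y hy => by
          have := (P.mem_range_d_zero_iff (ψ 0 *ᵥ y)).1 hy
          rw [hψv] at this
          exact (Q.mem_range_d_zero_iff y).2 (hC _ this)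
      | j + 1 => exact_fromBlocks_fromBlocks (P.exact (j + 1)) (hPψ (j + 1)) (Q.exact j) }

end Cone

theorem nonempty_sup_span_singleton (P : LinearResolution J deg) {u : MvPolynomial σ K}
    (Q : LinearResolution (J.colon (Ideal.span {u})) 1) (hu : u.IsHomogeneous deg) :
    Nonempty (LinearResolution (J ⊔ Ideal.span {u}) deg) := by
  obtain ⟨ψ, hψ₀, hψ, hPψ⟩ :=
    P.exists_comparison Q hu fun r hr => Ideal.mem_colon_span_singleton.1 hr
  exact ⟨P.cone Q hu ψ hψ₀ hψ hPψ fun r hr => Ideal.mem_colon_span_singleton.2 hr⟩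

end LinearResolution

theorem LinearResolution.hasLinRes {K σ : Type} [Field K] {I : Ideal (MvPolynomial σ K)}
    {deg : ℕ} (P : LinearResolution I deg) : HasLinRes I deg := by
  classical
  let e (j : ℕ) : Fin (Fintype.card (P.ι (j + 1))) ≃ P.ι (j + 1) := (Fintype.equivFin _).symm
  let g₀ := (P.d 0).submatrix (Equiv.refl _) (e 0)
  have hg₀ (v) : Fintype.linearCombination (MvPolynomial σ K) (g₀ default) v =
      (g₀ *ᵥ v) default := by
    simp [Fintype.linearCombination_apply, mulVec, dotProduct, mul_comm]
  refine ⟨{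
    b j := Fintype.card (P.ι (j + 1))
    dg i _ := i + deg
    g := g₀ default
    A i := (P.d (i + 1)).submatrix (e i) (e (i + 1))
    g_hom k := by
      rw [Nat.zero_add]
      exact P.isHomogeneous_zero default (e 0 k)
    A_hom i k l := by
      refine Or.inr ⟨?_, by omega⟩
      rw [show i + 1 + deg - (i + deg) = 1 by omega]
      exact P.isHomogeneous_succ i (e i k) (e (i + 1) l)
    aug_range := by
      ext r
      rw [LinearMap.mem_range, P.mem_iff]
      simp only [hg₀, g₀, submatrix_mulVec_equiv]
      exact ⟨fun ⟨v, hv⟩ => ⟨_, hv⟩, fun ⟨v, hv⟩ => ⟨v ∘ e 0, by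
        rwa [Function.comp_assoc, Equiv.self_comp_symm, Function.comp_id]⟩⟩
    aug_exact := by
      ext v
      have hzero : (g₀ *ᵥ v) default = 0 ↔ g₀ *ᵥ v = 0 :=
        ⟨fun h => funext fun x => by rwa [Unique.eq_default x], fun h => by rw [h]; rfl⟩
      rw [LinearMap.mem_ker, hg₀, hzero]
      exact (P.exact 0).matrix_submatrix (Equiv.refl _) (e 0) (e 1) v
    is_exact i := LinearMap.exact_iff.mp
      ((P.exact (i + 1)).matrix_submatrix (e i) (e (i + 1)) (e (i + 2))) }, fun _ _ => rfl⟩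

theorem MvPolynomial.span_X_image_colon_X {K σ : Type} [CommRing K] {s : Set σ} {a : σ}
    (ha : a ∉ s) :
    (Ideal.span (X '' s : Set (MvPolynomial σ K))).colon (Ideal.span {(X a : MvPolynomial σ K)}) =
      Ideal.span (X '' s) := by
  ext r
  rw [Ideal.mem_colon_span_singleton]
  refine ⟨fun h => ?_, fun h => Ideal.mul_mem_right _ _ h⟩
  rw [mem_ideal_span_X_image] at h ⊢
  intro μ hμ
  obtain ⟨b, hb, hμb⟩ := h (μ + Finsupp.single a 1) (by
    rwa [mem_support_iff, coeff_mul_X, ← mem_support_iff])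
  refine ⟨b, hb, ?_⟩
  rwa [Finsupp.add_apply, Finsupp.single_eq_of_ne (by rintro rfl; exact ha hb), add_zero] at hμb

theorem LinearResolution.nonempty_span_X_image {K σ : Type} [CommRing K] [Finite σ] (A : Set σ) :
    Nonempty (LinearResolution (Ideal.span (X '' A : Set (MvPolynomial σ K))) 1) := by
  classical
  rw [← (Set.toFinite A).coe_toFinset]
  induction (Set.toFinite A).toFinset using Finset.induction_on with
  | empty => simpa using ⟨bot 1⟩
  | insert a s ha ih =>
    obtain ⟨P⟩ := ih
    rw [Finset.coe_insert, Set.image_insert_eq, Ideal.span_insert, sup_comm]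
    exact P.nonempty_sup_span_singleton
      ((MvPolynomial.span_X_image_colon_X (K := K) ha).symm ▸ P) (isHomogeneous_X K a)

theorem hasLinRes_of_linearQuotients {K σ : Type} [Field K] [Finite σ] {k d : ℕ}
    (w : Fin k → σ →₀ ℕ) (hdeg : ∀ j, mdeg (w j) = d)
    (hlq : ∀ i : Fin k, genByVars (Submodule.colon
      (Ideal.span ((fun j => mon K (w j)) '' {j | j < i})) (Ideal.span {mon K (w i)})))
    (i : Fin k) : HasLinRes (Ideal.span ((fun j => mon K (w j)) '' {j | j ≤ i})) d := by
  suffices h : ∀ m : ℕ,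
      Nonempty (LinearResolution (Ideal.span ((fun j => mon K (w j)) '' {j | j.val < m})) d) by
    have hi : {j : Fin k | j ≤ i} = {j : Fin k | j.val < i.val + 1} := by
      ext j
      simp only [Set.mem_ofPred_eq, Fin.le_def]
      omega
    exact hi ▸ (h (i.val + 1)).some.hasLinRes
  intro m
  induction m with
  | zero => simpa using ⟨LinearResolution.bot d⟩
  | succ m ih =>
    by_cases hm : m < k
    · have hset : {j : Fin k | j.val < m + 1} = insert ⟨m, hm⟩ {j | j < ⟨m, hm⟩} := by
        ext j
        simp [Fin.lt_def, Fin.ext_iff]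
        omega
      have hlt : {j : Fin k | j < ⟨m, hm⟩} = {j | j.val < m} := by
        ext j
        simp [Fin.lt_def]
      obtain ⟨A, hA⟩ := hlq ⟨m, hm⟩
      obtain ⟨P⟩ := ih
      obtain ⟨Q⟩ := LinearResolution.nonempty_span_X_image (K := K) A
      rw [hset, Set.image_insert_eq, Ideal.span_insert, sup_comm, hlt]
      rw [hlt] at hA
      exact P.nonempty_sup_span_singleton (hA ▸ Q) (hdeg _ ▸ mon_isHomogeneous _)
    · have hset : {j : Fin k | j.val < m + 1} = {j | j.val < m} := by
        ext j
        simp only [Set.mem_ofPred_eq]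
        omega
      rwa [hset]

section Syzygies

variable {K σ ι κ : Type} [CommRing K] [Fintype ι] [Fintype κ]

def linearSyzygies (f : ι → MvPolynomial σ K) : Set (ι → MvPolynomial σ K) :=
  {s | s ⬝ᵥ f = 0 ∧ ∀ t, (s t).IsHomogeneous 1}

def HasLinearSyzygies (f : ι → MvPolynomial σ K) : Prop :=
  ∀ s, s ⬝ᵥ f = 0 → s ∈ Submodule.span (MvPolynomial σ K) (linearSyzygies f)

theorem MinFreeRes.hasLinearSyzygies {K : Type} [Field K] {I : Ideal (MvPolynomial σ K)} {e : ℕ}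
    (res : MinFreeRes I) (hdg : ∀ i k, res.dg i k = i + e) : HasLinearSyzygies res.g := by
  have hlc (s) : Fintype.linearCombination (MvPolynomial σ K) res.g s = s ⬝ᵥ res.g := by
    simp [Fintype.linearCombination_apply, dotProduct]
  intro s hs
  have hs : s ∈ LinearMap.range (res.A 0).mulVecLin := by
    rw [← res.aug_exact, LinearMap.mem_ker, hlc, hs]
  rw [range_mulVecLin] at hs
  refine Submodule.span_mono ?_ hs
  rintro _ ⟨l, rfl⟩
  refine ⟨?_, fun t => ?_⟩
  · classical
    rw [← hlc, ← mulVec_single_one, ← mulVecLin_apply, ← LinearMap.mem_ker, res.aug_exact]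
    exact LinearMap.mem_range_self _ _
  · rcases res.A_hom 0 t l with h | ⟨h, -⟩
    · show (res.A 0 t l).IsHomogeneous 1
      rw [h]
      exact MvPolynomial.isHomogeneous_zero _ _ _
    · simpa [hdg] using h

/-- The two systems of generators differ by an invertible scalar matrix. -/
theorem HasLinearSyzygies.of_span_eq {f : ι → MvPolynomial σ K} {g : κ → MvPolynomial σ K}
    {d : ℕ} (hg : HasLinearSyzygies g) (hf_hom : ∀ t, (f t).IsHomogeneous d)
    (hg_hom : ∀ j, (g j).IsHomogeneous d)
    (hspan : Ideal.span (Set.range f) = Ideal.span (Set.range g))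
    (hf : LinearIndependent K f) : HasLinearSyzygies f := by
  classical
  choose D hD using fun j =>
    MvPolynomial.exists_sum_C_mul_eq hf_hom (hspan ▸ Ideal.subset_span ⟨j, rfl⟩) (hg_hom j)
  choose E hE using fun t =>
    MvPolynomial.exists_sum_C_mul_eq hg_hom (hspan ▸ Ideal.subset_span ⟨t, rfl⟩) (hf_hom t)
  let D' : Matrix κ ι (MvPolynomial σ K) := (of D).map C
  let E' : Matrix ι κ (MvPolynomial σ K) := (of E).map C
  have hgD : D' *ᵥ f = g := funext hD
  have hfE : E' *ᵥ g = f := funext hE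
  have hED : E' * D' = 1 := by
    have hN : (of E * of D - 1).map C *ᵥ f = 0 := by
      rw [Matrix.map_sub _ (map_sub C), Matrix.map_mul, Matrix.map_one _ (map_zero C) (map_one C),
        sub_mulVec, ← mulVec_mulVec, hgD, hfE, one_mulVec, sub_self]
    have h1 : of E * of D = 1 := by
      ext t t'
      have := Fintype.linearIndependent_iff.1 hf (fun t' => (of E * of D - 1 : Matrix ι ι K) t t')
        (by simpa [mulVec, dotProduct, MvPolynomial.smul_eq_C_mul] using congrFun hN t) t'
      rwa [Matrix.sub_apply, sub_eq_zero] at this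
    rw [← Matrix.map_mul, h1, Matrix.map_one _ (map_zero C) (map_one C)]
  intro s hs
  have hs' : s ᵥ* E' ⬝ᵥ g = 0 := by rw [← dotProduct_mulVec, hfE, hs]
  rw [← vecMul_one s, ← hED, ← vecMul_vecMul]
  refine Submodule.span_mono ?_
    (Submodule.apply_mem_span_image_of_mem_span D'.vecMulLinear (hg _ hs'))
  rintro _ ⟨v, ⟨hv, hv_hom⟩, rfl⟩
  refine ⟨by rw [coe_vecMulLinear, ← dotProduct_mulVec, hgD, hv], fun t => ?_⟩
  exact MvPolynomial.IsHomogeneous.sum _ _ _ fun j _ =>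
    (hv_hom j).mul (MvPolynomial.isHomogeneous_C σ (D j t))

theorem mem_colon_iff_exists_syzygy [DecidableEq ι] (f : ι → MvPolynomial σ K) (i : ι)
    (c : MvPolynomial σ K) :
    c ∈ (Ideal.span (f '' {t | t ≠ i})).colon (Ideal.span {f i}) ↔
      ∃ s, s ⬝ᵥ f = 0 ∧ s i = c := by
  rw [Ideal.mem_colon_span_singleton]
  constructor
  · intro h
    obtain ⟨l, hl, hlc⟩ := (Finsupp.mem_span_image_iff_linearCombination _).1 h
    have hli : l i = 0 := Finsupp.notMem_support_iff.1 fun hi => hl hi rfl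
    refine ⟨Pi.single i c - ⇑l, ?_, by simp [hli]⟩
    rw [sub_dotProduct, single_dotProduct, ← hlc, Finsupp.linearCombination_apply,
      Finsupp.sum_fintype _ _ (by simp)]
    simp [dotProduct]
  · rintro ⟨s, hs, rfl⟩
    rw [dotProduct, ← Finset.add_sum_erase _ _ (Finset.mem_univ i), add_eq_zero_iff_eq_neg] at hs
    rw [hs]
    refine neg_mem (Ideal.sum_mem _ fun t ht => Ideal.mul_mem_left _ _ (Ideal.subset_span ?_))
    exact ⟨t, Finset.ne_of_mem_erase ht, rfl⟩

theorem HasLinearSyzygies.genByLinForms_colon {K : Type} [Field K] {f : ι → MvPolynomial σ K}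
    (hf : HasLinearSyzygies f) (i : ι) :
    genByLinForms ((Ideal.span (f '' {t | t ≠ i})).colon (Ideal.span {f i})) := by
  classical
  refine ⟨(fun s => s i) '' linearSyzygies f, ?_, le_antisymm ?_ ?_⟩
  · rintro _ ⟨s, ⟨-, hs⟩, rfl⟩
    exact hs i
  · intro c hc
    obtain ⟨s, hs, rfl⟩ := (mem_colon_iff_exists_syzygy f i c).1 hc
    exact Submodule.apply_mem_span_image_of_mem_span (LinearMap.proj i) (hf s hs)
  · rw [Ideal.span_le]
    rintro _ ⟨s, ⟨hs, -⟩, rfl⟩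
    exact (mem_colon_iff_exists_syzygy f i _).2 ⟨s, hs, rfl⟩

end Syzygies

section MonomialIdeal

variable {K σ : Type} [CommRing K]

def IsMonomialIdeal (I : Ideal (MvPolynomial σ K)) : Prop :=
  ∀ p ∈ I, ∀ μ ∈ p.support, monomial μ 1 ∈ I

theorem isMonomialIdeal_colon (S : Set (σ →₀ ℕ)) (v : σ →₀ ℕ) :
    IsMonomialIdeal ((Ideal.span ((fun μ => monomial μ (1 : K)) '' S)).colon
      (Ideal.span {monomial v (1 : K)})) := by
  intro p hp μ hμ
  rw [Ideal.mem_colon_span_singleton, mem_ideal_span_monomial_image] at hp ⊢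
  intro ν hν
  rw [monomial_mul, one_mul] at hν
  rw [Finset.mem_singleton.1 (support_monomial_subset hν)]
  exact hp (μ + v) (by rwa [mem_support_iff, coeff_mul_monomial, mul_one, ← mem_support_iff])

theorem IsMonomialIdeal.genByVars {K : Type} [Field K] {I : Ideal (MvPolynomial σ K)}
    (hI : IsMonomialIdeal I) (hlin : genByLinForms I) : genByVars I := by
  obtain ⟨S, hS, rfl⟩ := hlin
  refine ⟨{x | X x ∈ Ideal.span S}, le_antisymm ?_ ?_⟩
  · rw [Ideal.span_le]
    intro ℓ hℓ
    rw [SetLike.mem_coe, ← support_sum_monomial_coeff ℓ]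
    refine Ideal.sum_mem _ fun μ hμ => ?_
    have hμ1 : μ ∈ Set.range fun x => Finsupp.single x 1 := by
      rw [Finsupp.range_single_one]
      by_contra h
      exact mem_support_iff.1 hμ ((hS ℓ hℓ).coeff_eq_zero h)
    obtain ⟨x, rfl⟩ := hμ1
    rw [← mul_one (coeff _ ℓ), ← smul_eq_mul, ← smul_monomial, smul_eq_C_mul]
    exact Ideal.mul_mem_left _ _
      (Ideal.subset_span ⟨x, hI ℓ (Ideal.subset_span hℓ) _ hμ, rfl⟩)
  · rw [Ideal.span_le]
    rintro _ ⟨x, hx, rfl⟩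
    exact hx

end MonomialIdeal

theorem genByVars_colon_of_hasLinRes {K σ : Type} [Field K] {k d e : ℕ} (w : Fin k → σ →₀ ℕ)
    (hw : Function.Injective w) (hdeg : ∀ j, mdeg (w j) = d) (i : Fin k)
    (h : HasLinRes (Ideal.span ((fun j => mon K (w j)) '' {j | j ≤ i})) e) :
    genByVars (Submodule.colon (Ideal.span ((fun j => mon K (w j)) '' {j | j < i}))
      (Ideal.span {mon K (w i)})) := by
  classical
  obtain ⟨res, hdg⟩ := h
  let f (t : {j | j ≤ i}) : MvPolynomial σ K := mon K (w t)
  let i₀ : {j | j ≤ i} := ⟨i, le_refl i⟩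
  have hspan : Ideal.span (Set.range f) = Ideal.span (Set.range res.g) := by
    have hf : Ideal.span (Set.range f) =
        Ideal.span ((fun j => mon K (w j)) '' {j | j ≤ i}) := by
      rw [Set.image_eq_range]
    have hg : Ideal.span (Set.range res.g) =
        Ideal.span ((fun j => mon K (w j)) '' {j | j ≤ i}) :=
      (Fintype.range_linearCombination _ _).symm.trans res.aug_range
    exact hf.trans hg.symm
  have hf_hom (t) : (f t).IsHomogeneous d := hdeg t ▸ mon_isHomogeneous _
  have hg_hom (j) : (res.g j).IsHomogeneous e := by simpa [hdg] using res.g_hom j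
  obtain rfl : d = e := MvPolynomial.eq_of_isHomogeneous_of_span_eq hf_hom hg_hom hspan
    (t := i₀) (by simp [f, mon])
  have hf_lin : LinearIndependent K f := by
    simpa [f, mon, Function.comp_def] using
      (basisMonomials σ K).linearIndependent.comp (fun t : {j | j ≤ i} => w t)
        (hw.comp Subtype.val_injective)
  have hsyz := (res.hasLinearSyzygies hdg).of_span_eq hf_hom hg_hom hspan hf_lin
  have hlt : (fun j => mon K (w j)) '' {j | j < i} = f '' {t | t ≠ i₀} := by
    ext p
    constructor
    · rintro ⟨j, hj, rfl⟩
      exact ⟨⟨j, le_of_lt (show j < i from hj)⟩, fun h => (ne_of_lt hj) (congrArg Subtype.val h),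
        rfl⟩
    · rintro ⟨⟨j, hj⟩, hne, rfl⟩
      exact ⟨j, lt_of_le_of_ne hj fun h => hne (Subtype.ext h), rfl⟩
  rw [hlt]
  refine IsMonomialIdeal.genByVars ?_ (hsyz.genByLinForms_colon i₀)
  have := isMonomialIdeal_colon (K := K) ((fun t : {j | j ≤ i} => w t) '' {t | t ≠ i₀}) (w i)
  rwa [Set.image_image] at this

theorem stmt_4_general {K : Type} [Field K] {n d k : ℕ} (u : Fin k → (Fin n →₀ ℕ))
    (hinj : Function.Injective u)
    (hdeg : ∀ i, mdeg (u i) = d) :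
    (∃ σ : Equiv.Perm (Fin k), ∀ i : Fin k,
        genByVars (Submodule.colon
          (Ideal.span ((fun j => mon K (u (σ j))) '' {j | j < i}))
          (Ideal.span {mon K (u (σ i))})))
    ↔ (∃ σ : Equiv.Perm (Fin k), ∀ i : Fin k,
        ∃ e, HasLinRes (Ideal.span ((fun j => mon K (u (σ j))) '' {j | j ≤ i})) e) := by
  constructor
  · rintro ⟨σ, h⟩
    exact ⟨σ, fun i => ⟨d, hasLinRes_of_linearQuotients _ (fun j => hdeg _) h i⟩⟩
  · rintro ⟨σ, h⟩
    refine ⟨σ, fun i => ?_⟩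
    obtain ⟨e, he⟩ := h i
    exact genByVars_colon_of_hasLinRes _ (hinj.comp σ.injective) (fun j => hdeg _) i he

/-- A monomial ideal `I` generated in a single degree `d`, with minimal
monomial generators `u_1, …, u_k`, has linear quotients (i.e. for some ordering the colon
ideals `(u_1, …, u_{i-1}) : u_i` are generated by variables) if and only if there is an
ordering `u_1, …, u_k` of `G(I)` such that the ideal `(u_1, …, u_i)` has a linear
resolution for each `i = 1, …, k`. -/
theorem stmt_4 {K : Type} [Field K] {n d k : ℕ} (u : Fin k → (Fin n →₀ ℕ))
    (hinj : Function.Injective u) (hmin : IsMinGenSet (Set.range u))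
    (hdeg : ∀ i, mdeg (u i) = d) :
    (∃ σ : Equiv.Perm (Fin k), ∀ i : Fin k,
        genByVars (Submodule.colon
          (Ideal.span ((fun j => mon K (u (σ j))) '' {j | j < i}))
          (Ideal.span {mon K (u (σ i))})))
    ↔ (∃ σ : Equiv.Perm (Fin k), ∀ i : Fin k,
        ∃ e, HasLinRes (Ideal.span ((fun j => mon K (u (σ j))) '' {j | j ≤ i})) e) :=
  stmt_4_general u hinj hdeg
end

section
/- A monomial ideal I generated in degree 2 is quasi-linear if and only if its polarization I^p is quasi-linear. -/
open MvPolynomial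

/-- Polarization of an exponent vector with entries `≤ 2`: the power `x_i^a` (`a ≤ 2`)
is replaced by the squarefree product `x_{i,1} ⋯ x_{i,a}` of new variables. -/
noncomputable def polExp {n : ℕ} (u : Fin n →₀ ℕ) : (Fin n × Fin 2) →₀ ℕ :=
  ∑ p : Fin n × Fin 2, if (p.2 : ℕ) < u p.1 then Finsupp.single p 1 else 0

/-!
Dividing by a monomial `x^u` subtracts exponents, so `(S \ {u}) : x^u` is the monomial ideal
generated by the `v - u`, and a monomial ideal is generated by variables exactly when each of
its generators is divisible by a variable it contains. Hence `S` is quasi-linear iff for all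
`u ≠ v` in `S` there are `w ∈ S` and `k` with `w - u = e_k` and `u k < v k`. For exponents
at most `2`, polarization matches these witnesses: `w - u = e_k` becomes
`polExp w - polExp u = e_(k, u k)`, and `u k < v k` says that `x_(k, u k)` divides
`x^(polExp v)` but not `x^(polExp u)`.
-/

section MonomialIdeal

variable {K : Type} [Field K] {σ : Type}

lemma mem_monIdeal {S : Set (σ →₀ ℕ)} {f : MvPolynomial σ K} :
    f ∈ monIdeal K S ↔ ∀ m ∈ f.support, ∃ s ∈ S, s ≤ m :=
  mem_ideal_span_monomial_image

lemma mon_mem_monIdeal {S : Set (σ →₀ ℕ)} {m : σ →₀ ℕ} :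
    mon K m ∈ monIdeal K S ↔ ∃ s ∈ S, s ≤ m := by
  classical
  simp [mem_monIdeal, mon, support_monomial]

lemma mon_mem_span_X {A : Set σ} {m : σ →₀ ℕ} :
    mon K m ∈ Ideal.span ((fun i => (X i : MvPolynomial σ K)) '' A) ↔ ∃ i ∈ A, m i ≠ 0 := by
  classical
  simp [mem_ideal_span_X_image, mon, support_monomial]

lemma monIdeal_colon_mon (T : Set (σ →₀ ℕ)) (u : σ →₀ ℕ) :
    (monIdeal K T).colon (Ideal.span {mon K u}) = monIdeal K ((· - u) '' T) := by
  ext f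
  have hsupp : (f * mon K u).support = f.support.map (addRightEmbedding u) :=
    AddMonoidAlgebra.support_coeff_mul_single f 1 (by simp) u
  rw [Submodule.mem_colon_span_singleton, smul_eq_mul, mem_monIdeal, mem_monIdeal, hsupp]
  simp [tsub_le_iff_right]

lemma genByVars_monIdeal_iff {M : Set (σ →₀ ℕ)} :
    genByVars (monIdeal K M) ↔ ∀ m ∈ M, ∃ k, Finsupp.single k 1 ∈ M ∧ m k ≠ 0 := by
  constructor
  · rintro ⟨A, hA⟩ m hm
    have hvar : ∀ m ∈ M, ∃ i ∈ A, m i ≠ 0 := fun m hm =>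
      mon_mem_span_X.1 (hA ▸ mon_mem_monIdeal.2 ⟨m, hm, le_rfl⟩)
    obtain ⟨i, hiA, hi⟩ := hvar m hm
    obtain ⟨s, hs, hle⟩ : ∃ s ∈ M, s ≤ Finsupp.single i 1 :=
      mon_mem_monIdeal.1 (hA ▸ mon_mem_span_X.2 ⟨i, hiA, by simp⟩)
    have hsi : s i ≠ 0 := by
      obtain ⟨j, -, hj⟩ := hvar s hs
      obtain rfl : j = i := by
        by_contra hji
        simpa [Finsupp.single_eq_of_ne hji, hj] using hle j
      exact hj
    refine ⟨i, ?_, hi⟩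
    rwa [← le_antisymm hle (Finsupp.single_le_iff.2 (Nat.one_le_iff_ne_zero.2 hsi))]
  · intro h
    refine ⟨{k | Finsupp.single k 1 ∈ M}, ?_⟩
    ext f
    rw [mem_monIdeal, mem_ideal_span_X_image]
    refine forall₂_congr fun m _ => ⟨?_, ?_⟩
    · rintro ⟨s, hs, hsm⟩
      obtain ⟨k, hk, hsk⟩ := h s hs
      exact ⟨k, hk, (Nat.pos_of_ne_zero hsk).trans_le (hsm k) |>.ne'⟩
    · rintro ⟨k, hk, hmk⟩
      exact ⟨_, hk, Finsupp.single_le_iff.2 (Nat.one_le_iff_ne_zero.2 hmk)⟩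

lemma quasiLinear_iff {S : Set (σ →₀ ℕ)} :
    QuasiLinear K S ↔ ∀ u ∈ S, ∀ v ∈ S, v ≠ u →
      ∃ k, (∃ w ∈ S, w - u = Finsupp.single k 1) ∧ u k < v k := by
  refine forall₂_congr fun u _ => ?_
  have hstep : ∀ k, Finsupp.single k 1 ∈ (· - u) '' (S \ {u}) ↔
      ∃ w ∈ S, w - u = Finsupp.single k 1 := by
    refine fun k => ⟨fun ⟨w, hw, h⟩ => ⟨w, hw.1, h⟩, fun ⟨w, hw, h⟩ => ⟨w, ⟨hw, ?_⟩, h⟩⟩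
    rintro rfl
    simp [eq_comm] at h
  rw [monIdeal_colon_mon, genByVars_monIdeal_iff, Set.forall_mem_image]
  simp only [Set.mem_sdiff, Set.mem_singleton_iff, and_imp, hstep, Finsupp.tsub_apply,
    Nat.sub_ne_zero_iff_lt]

end MonomialIdeal

section Polarization

variable {n : ℕ}

lemma polExp_apply (u : Fin n →₀ ℕ) (p : Fin n × Fin 2) :
    polExp u p = if (p.2 : ℕ) < u p.1 then 1 else 0 := by
  classical
  rw [polExp, Finsupp.finsetSum_apply, Finset.sum_eq_single_of_mem p (Finset.mem_univ _)]
  · split_ifs <;> simp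
  · intro q _ hq
    split_ifs <;> simp [hq]

lemma injOn_polExp : Set.InjOn polExp {u : Fin n →₀ ℕ | ∀ j, u j ≤ 2} := by
  intro u hu v hv h
  ext j
  have h0 := DFunLike.congr_fun h (j, 0)
  have h1 := DFunLike.congr_fun h (j, 1)
  simp only [polExp_apply, Fin.val_zero, Fin.val_one] at h0 h1
  have := hu j; have := hv j
  split_ifs at h0 h1 <;> omega

lemma polExp_sub_eq_single_iff {u w : Fin n →₀ ℕ} (hw : ∀ j, w j ≤ 2) {k : Fin n} {t : Fin 2} :
    polExp w - polExp u = Finsupp.single (k, t) 1 ↔ w - u = Finsupp.single k 1 ∧ u k = t := by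
  classical
  simp only [Finsupp.ext_iff, Prod.forall, Fin.forall_fin_two, Finsupp.tsub_apply, polExp_apply,
    Finsupp.single_apply, Prod.mk.injEq]
  constructor
  · intro H
    have H' : ∀ a, w a - u a = if k = a then 1 else 0 := fun a => by
      obtain ⟨h0, h1⟩ := H a; have := hw a
      by_cases hka : k = a <;> fin_cases t <;> simp [hka] at h0 h1 ⊢ <;> split_ifs at h0 h1 <;> omega
    refine ⟨H', ?_⟩
    obtain ⟨h0, h1⟩ := H k; have := H' k
    fin_cases t <;> simp at h0 h1 this ⊢ <;> split_ifs at h0 h1 <;> omega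
  · rintro ⟨H, ht⟩ a
    have hwu := H a; have := hw a
    by_cases hka : k = a
    · subst hka; fin_cases t <;> simp at hwu ht ⊢ <;> split_ifs <;> omega
    · simp only [hka, if_false, false_and] at hwu ⊢; split_ifs <;> omega

lemma exists_polExp_sub_eq_single_iff {S : Set (Fin n →₀ ℕ)} (hS : ∀ w ∈ S, ∀ j, w j ≤ 2)
    {u v : Fin n →₀ ℕ} (hv : ∀ j, v j ≤ 2) :
    (∃ p, (∃ w ∈ S, polExp w - polExp u = Finsupp.single p 1) ∧ polExp u p < polExp v p) ↔
      ∃ k, (∃ w ∈ S, w - u = Finsupp.single k 1) ∧ u k < v k := by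
  constructor
  · rintro ⟨⟨k, t⟩, ⟨w, hw, hwu⟩, hlt⟩
    obtain ⟨hwu, hkt⟩ := (polExp_sub_eq_single_iff (hS w hw)).1 hwu
    refine ⟨k, ⟨w, hw, hwu⟩, ?_⟩
    simp only [polExp_apply] at hlt
    split_ifs at hlt <;> omega
  · rintro ⟨k, ⟨w, hw, hwu⟩, hlt⟩
    have huk : u k < 2 := by have := hv k; omega
    refine ⟨(k, ⟨u k, huk⟩), ⟨w, hw, (polExp_sub_eq_single_iff (hS w hw)).2 ⟨hwu, rfl⟩⟩, ?_⟩
    simp [polExp_apply, hlt]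

end Polarization

theorem stmt_8_general {K : Type} [Field K] {n : ℕ} (S : Set (Fin n →₀ ℕ))
    (hdeg : ∀ v ∈ S, mdeg v = 2) :
    QuasiLinear K S ↔ QuasiLinear K (polExp '' S) := by
  have hS : ∀ v ∈ S, ∀ j, v j ≤ 2 := fun v hv j => (Finsupp.le_degree j v).trans_eq (hdeg v hv)
  have hinj : S.InjOn polExp := injOn_polExp.mono hS
  simp only [quasiLinear_iff, Set.forall_mem_image, Set.exists_mem_image]
  refine forall₂_congr fun u hu => forall₂_congr fun v hv => ?_
  rw [hinj.ne_iff hv hu, exists_polExp_sub_eq_single_iff hS (hS v hv)]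

/-- A monomial ideal `I` generated in degree `2` (with minimal monomial
generating set `S`) is quasi-linear if and only if its polarization `I^p` is
quasi-linear. -/
theorem stmt_8 {K : Type} [Field K] {n : ℕ} (S : Set (Fin n →₀ ℕ))
    (hmin : IsMinGenSet S) (hdeg : ∀ v ∈ S, mdeg v = 2) :
    QuasiLinear K S ↔ QuasiLinear K (polExp '' S) :=
  stmt_8_general S hdeg
end

section
/- Let m = (x₁,...,x_n), d ≥ 2, and u ∈ G(m^d). Then the ideal generated by G(m^d)\{u} is quasi-linear if and only if |supp(u)| ≠ 2. -/
open MvPolynomial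

/-!
The colon ideal `(G \ {w}) : w` of a monomial ideal is again monomial, so it is generated by
variables iff each of its monomials is divisible by a variable lying in it. For generators of a
single degree, `xᵢ` lies in it iff some exchange `w xᵢ / xⱼ` (with `j ≠ i`, `xⱼ ∣ w`) is a
generator other than `w`, i.e. differs from the removed monomial `u`.

If `v ≠ w` divides `m w`, pick `i` with `wᵢ < vᵢ`; then `xᵢ ∣ m`. Should every exchange at `i`
equal `u`, then `supp w ⊆ {i, j}` and `u = w xᵢ / xⱼ`, so `|supp u| ≠ 2` forces `u = xᵢ^d`, and
`vᵢ > wᵢ = d - 1` gives `v = u`, a contradiction. Conversely, if `supp u = {a, b}`, take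
`w = u xₐ / x_b`: the colon contains `x_b^d` but not `x_b`, since the only exchanges of `w` at
`b` are `w` itself and `u`.
-/

lemma mdeg_eq_degree {σ : Type} (u : σ →₀ ℕ) : mdeg u = u.degree := rfl

namespace Finsupp

variable {σ : Type*}

lemma eq_of_le_of_degree_le {a b : σ →₀ ℕ} (hab : a ≤ b) (h : b.degree ≤ a.degree) : a = b := by
  obtain ⟨c, rfl⟩ := le_iff_exists_add.mp hab
  have hc : c.degree = 0 := by simp only [map_add] at h; omega
  simp [(degree_eq_zero_iff c).mp hc]

lemma exists_lt_apply_of_ne {v w : σ →₀ ℕ} (hne : v ≠ w) (h : w.degree ≤ v.degree) :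
    ∃ i, w i < v i := by
  by_contra! hle
  exact hne (eq_of_le_of_degree_le hle h)

lemma exists_add_single_eq_of_le {v x : σ →₀ ℕ} (hle : v ≤ x) (h : x.degree = v.degree + 1) :
    ∃ j, v + single j 1 = x := by
  obtain ⟨c, rfl⟩ := le_iff_exists_add.mp hle
  have hc : c.degree = 1 := by simp only [map_add] at h; omega
  obtain ⟨j, rfl⟩ := (sum_eq_one_iff c).mp hc
  exact ⟨j, rfl⟩

lemma eq_single_of_forall_single_add_eq {u w : σ →₀ ℕ} {i : σ} (hcard : u.support.card ≠ 2)
    (hwi : w i < w.degree) (h : ∀ j ≠ i, w j ≠ 0 → single i 1 + w = u + single j 1) :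
    u = single i (w i + 1) := by
  classical
  obtain ⟨j, hji, hwj⟩ : ∃ j ≠ i, w j ≠ 0 := by
    by_contra! hw
    have : w = single i (w i) := support_subset_singleton.mp fun k hk => by
      by_contra hki
      exact mem_support_iff.mp hk (hw k (by simpa using hki))
    rw [this, degree_single, single_eq_same] at hwi
    exact lt_irrefl _ hwi
  have hij (k : σ) := DFunLike.congr_fun (h j hji hwj) k
  have hw_supp : ∀ k ≠ i, k ≠ j → w k = 0 := fun k hki hkj => by
    by_contra hwk
    have : single k 1 = single j 1 := add_left_cancel ((h k hki hwk).symm.trans (h j hji hwj))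
    exact hkj (single_left_injective one_ne_zero this)
  have hui : u i = w i + 1 := by
    have := hij i
    simp only [coe_add, Pi.add_apply, single_eq_same, single_eq_of_ne' hji, add_zero] at this
    omega
  have hu_supp : ∀ k ≠ i, k ≠ j → u k = 0 := fun k hki hkj => by
    have := hij k
    simp only [coe_add, Pi.add_apply, single_eq_of_ne hki, single_eq_of_ne hkj, hw_supp k hki hkj,
      add_zero] at this
    omega
  have huj : u j = 0 := by
    by_contra huj
    refine hcard (Finset.card_eq_two.mpr ⟨i, j, hji.symm, Finset.ext fun k => ?_⟩)
    by_cases hki : k = i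
    · simp only [hki, mem_support_iff, hui, Finset.mem_insert, true_or, iff_true]
      omega
    by_cases hkj : k = j
    · simp [hkj, huj]
    · simp [hki, hkj, hu_supp k hki hkj]
  rw [← hui]
  refine support_subset_singleton.mp fun k hk => Finset.mem_singleton.mpr ?_
  by_contra hki
  by_cases hkj : k = j
  · exact mem_support_iff.mp hk (hkj ▸ huj)
  · exact mem_support_iff.mp hk (hu_supp k hki hkj)

end Finsupp

section Colon

variable {K : Type} [Field K] {σ : Type}

lemma mem_support_mul_mon_iff {f : MvPolynomial σ K} {w m' : σ →₀ ℕ} :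
    m' ∈ (f * mon K w).support ↔ ∃ m ∈ f.support, m + w = m' := by
  simp only [mem_support_iff, mon, coeff_mul_monomial', mul_one]
  constructor
  · intro h
    split_ifs at h with hw
    · exact ⟨m' - w, h, tsub_add_cancel_of_le hw⟩
    · exact absurd rfl h
  · rintro ⟨m, hm, rfl⟩
    simpa using hm

variable {S : Set (σ →₀ ℕ)} {w : σ →₀ ℕ}

lemma mem_colon_monIdeal_iff {f : MvPolynomial σ K} :
    f ∈ (monIdeal K S).colon (Ideal.span {mon K w}) ↔ ∀ m ∈ f.support, ∃ s ∈ S, s ≤ m + w := by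
  rw [Ideal.mem_colon_span_singleton, monIdeal, show (mon K '' S) = (monomial · 1) '' S from rfl,
    mem_ideal_span_monomial_image]
  constructor
  · intro h m hm
    exact h _ (mem_support_mul_mon_iff.mpr ⟨m, hm, rfl⟩)
  · intro h m' hm'
    obtain ⟨m, hm, rfl⟩ := mem_support_mul_mon_iff.mp hm'
    exact h m hm

lemma mon_mem_colon_monIdeal_iff {m : σ →₀ ℕ} :
    mon K m ∈ (monIdeal K S).colon (Ideal.span {mon K w}) ↔ ∃ s ∈ S, s ≤ m + w := by
  classical
  rw [mem_colon_monIdeal_iff, mon, support_monomial, if_neg one_ne_zero]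
  simp

lemma X_mem_colon_monIdeal_iff {i : σ} :
    X i ∈ (monIdeal K S).colon (Ideal.span {mon K w}) ↔ ∃ s ∈ S, s ≤ Finsupp.single i 1 + w :=
  mon_mem_colon_monIdeal_iff

lemma genByVars_colon_monIdeal_iff :
    genByVars ((monIdeal K S).colon (Ideal.span {mon K w})) ↔
      ∀ m, (∃ s ∈ S, s ≤ m + w) → ∃ i, m i ≠ 0 ∧ ∃ s ∈ S, s ≤ Finsupp.single i 1 + w := by
  set J := (monIdeal K S).colon (Ideal.span {mon K w})
  constructor
  · rintro ⟨A, hA⟩ m hm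
    have hmJ : mon K m ∈ Ideal.span (X '' A) := hA ▸ mon_mem_colon_monIdeal_iff.mpr hm
    obtain ⟨i, hiA, hmi⟩ :=
      mem_ideal_span_X_image.mp hmJ m (by classical simp [mon, mem_support_iff, coeff_monomial])
    have hiJ : X i ∈ J := hA ▸ Ideal.subset_span ⟨i, hiA, rfl⟩
    exact ⟨i, hmi, X_mem_colon_monIdeal_iff.mp hiJ⟩
  · intro h
    refine ⟨{i | X i ∈ J}, le_antisymm (fun f hf => ?_) (Ideal.span_le.mpr ?_)⟩
    · refine mem_ideal_span_X_image.mpr fun m hm => ?_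
      obtain ⟨i, hmi, hi⟩ := h m (mem_colon_monIdeal_iff.mp hf m hm)
      exact ⟨i, X_mem_colon_monIdeal_iff.mpr hi, hmi⟩
    · rintro _ ⟨i, hi, rfl⟩
      exact hi

lemma quasiLinear_iff_s11 :
    QuasiLinear K S ↔ ∀ w ∈ S, ∀ m, (∃ s ∈ S \ {w}, s ≤ m + w) →
      ∃ i, m i ≠ 0 ∧ ∃ s ∈ S \ {w}, s ≤ Finsupp.single i 1 + w :=
  forall₂_congr fun _ _ => genByVars_colon_monIdeal_iff

end Colon

section Exchange

open Finsupp

variable {σ : Type} {d : ℕ} {u w : σ →₀ ℕ}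

lemma exists_mem_diff_le_single_add_iff (hw : mdeg w = d) {i : σ} :
    (∃ v ∈ {v : σ →₀ ℕ | mdeg v = d ∧ v ≠ u} \ {w}, v ≤ single i 1 + w) ↔
      ∃ j ≠ i, w j ≠ 0 ∧ single i 1 + w ≠ u + single j 1 := by
  classical
  rw [mdeg_eq_degree] at hw
  constructor
  · rintro ⟨v, ⟨⟨hvd, hvu⟩, hvw⟩, hle⟩
    rw [Set.mem_singleton_iff] at hvw
    have hdeg : (single i 1 + w).degree = v.degree + 1 := by
      rw [map_add, degree_single, hw, ← mdeg_eq_degree, hvd, add_comm]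
    obtain ⟨j, hj⟩ := exists_add_single_eq_of_le hle hdeg
    have hji : j ≠ i := by
      rintro rfl
      exact hvw (add_right_cancel (hj.trans (add_comm _ _)))
    have hwj : w j ≠ 0 := by
      have := DFunLike.congr_fun hj j
      simp only [Finsupp.coe_add, Pi.add_apply, single_eq_same, single_eq_of_ne hji,
        zero_add] at this
      omega
    exact ⟨j, hji, hwj, fun h => hvu (add_right_cancel (hj.trans h))⟩
  · rintro ⟨j, hji, hwj, hne⟩
    have hle : single j 1 ≤ single i 1 + w :=
      single_le_iff.mpr (by simpa [single_eq_of_ne hji, Nat.one_le_iff_ne_zero] using hwj)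
    have hv : single i 1 + w - single j 1 + single j 1 = single i 1 + w :=
      tsub_add_cancel_of_le hle
    refine ⟨_, ⟨⟨?_, fun h => hne (h ▸ hv).symm⟩, fun h => hji ?_⟩, tsub_le_self⟩
    · have := congrArg degree hv
      simp only [map_add, degree_single] at this
      rw [mdeg_eq_degree]
      omega
    · rw [Set.mem_singleton_iff.mp h, add_comm] at hv
      exact single_left_injective one_ne_zero (add_right_cancel hv)

lemma exists_exchange_of_card_support_ne_two (hcard : u.support.card ≠ 2) (hu : mdeg u = d)
    (hw : mdeg w = d) {v m : σ →₀ ℕ} (hv : mdeg v = d) (hvu : v ≠ u) (hvw : v ≠ w)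
    (hle : v ≤ m + w) :
    ∃ i, m i ≠ 0 ∧ ∃ j ≠ i, w j ≠ 0 ∧ single i 1 + w ≠ u + single j 1 := by
  rw [mdeg_eq_degree] at hu hw hv
  obtain ⟨i, hwi⟩ := exists_lt_apply_of_ne hvw (by rw [hv, hw])
  have hmi : m i ≠ 0 := by
    have := hle i
    simp only [Finsupp.coe_add, Pi.add_apply] at this
    omega
  refine ⟨i, hmi, ?_⟩
  by_contra! h
  have hwi_lt : w i < w.degree := hwi.trans_le ((le_degree i v).trans_eq (hv.trans hw.symm))
  have hu_eq := eq_single_of_forall_single_add_eq hcard hwi_lt h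
  have : u = v := eq_of_le_of_degree_le (hu_eq ▸ single_le_iff.mpr hwi) (by
    rw [hv, ← hu, hu_eq, degree_single])
  exact hvu this.symm

lemma exists_not_exchange_of_card_support_eq_two (hu : mdeg u = d) (hcard : u.support.card = 2) :
    ∃ w ∈ {v : σ →₀ ℕ | mdeg v = d ∧ v ≠ u}, ∃ m : σ →₀ ℕ,
      (∃ s ∈ {v : σ →₀ ℕ | mdeg v = d ∧ v ≠ u} \ {w}, s ≤ m + w) ∧
      ∀ i, m i ≠ 0 → ¬∃ s ∈ {v : σ →₀ ℕ | mdeg v = d ∧ v ≠ u} \ {w}, s ≤ single i 1 + w := by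
  classical
  obtain ⟨a, b, hab, hsupp⟩ := Finset.card_eq_two.mp hcard
  have hu_supp (k : σ) : u k ≠ 0 ↔ k = a ∨ k = b := by
    rw [← Finsupp.mem_support_iff, hsupp, Finset.mem_insert, Finset.mem_singleton]
  obtain ⟨u', hu'⟩ := le_iff_exists_add.mp
    (single_le_iff.mpr (Nat.one_le_iff_ne_zero.mpr ((hu_supp b).mpr (Or.inr rfl))))
  set w := single a 1 + u'
  have hexch : single b 1 + w = u + single a 1 := by rw [hu', add_assoc, add_comm u']
  have hwd : mdeg w = d := by
    rw [← hu, mdeg_eq_degree, mdeg_eq_degree, hu']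
    simp only [w, map_add, degree_single]
  have hwa : w a ≠ 0 := by simp [w]
  have hua : u a ≠ 0 := (hu_supp a).mpr (Or.inl rfl)
  refine ⟨w, ⟨hwd, fun h => ?_⟩, single b d,
    ⟨single b d, ⟨⟨degree_single b d, ?_⟩, ?_⟩, le_self_add⟩, ?_⟩
  · rw [h, add_comm] at hexch
    exact hab (single_left_injective one_ne_zero (add_left_cancel hexch)).symm
  · rintro rfl
    exact hua (single_eq_of_ne hab)
  · rintro h
    exact hwa (Set.mem_singleton_iff.mp h ▸ single_eq_of_ne hab)
  · intro i hi
    obtain rfl : i = b := by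
      by_contra hib
      exact hi (single_eq_of_ne hib)
    rw [exists_mem_diff_le_single_add_iff hwd, hexch]
    rintro ⟨j, hjb, hwj, hne⟩
    have hja : j ≠ a := by
      rintro rfl
      exact hne rfl
    have huj : u j = 0 := by simpa [hja, hjb] using hu_supp j
    rw [hu'] at huj
    simp only [w, Finsupp.coe_add, Pi.add_apply, single_eq_of_ne hja, single_eq_of_ne hjb,
      zero_add] at hwj huj
    exact hwj huj

end Exchange

theorem stmt_11_general {K : Type} [Field K] {n d : ℕ}
    (u : Fin n →₀ ℕ) (hu : mdeg u = d) :
    QuasiLinear K {v : Fin n →₀ ℕ | mdeg v = d ∧ v ≠ u} ↔ u.support.card ≠ 2 := by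
  rw [quasiLinear_iff_s11]
  constructor
  · intro hql hcard
    obtain ⟨w, hw, m, hm, hno⟩ := exists_not_exchange_of_card_support_eq_two hu hcard
    obtain ⟨i, hmi, hi⟩ := hql w hw m hm
    exact hno i hmi hi
  · rintro hcard w ⟨hwd, -⟩ m ⟨v, ⟨⟨hvd, hvu⟩, hvw⟩, hle⟩
    obtain ⟨i, hmi, hi⟩ :=
      exists_exchange_of_card_support_ne_two hcard hu hwd hvd hvu (Set.mem_singleton_iff.not.mp hvw)
        hle
    exact ⟨i, hmi, (exists_mem_diff_le_single_add_iff hwd).mpr hi⟩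

/-- Let `𝔪 = (x_1, …, x_n)`, `d ≥ 2`, and `u ∈ G(𝔪^d)`.  Then the
ideal generated by `G(𝔪^d) \ {u}`, i.e. by all monomials of degree `d` other than `u`,
is quasi-linear if and only if `|supp(u)| ≠ 2`. -/
theorem stmt_11 {K : Type} [Field K] {n d : ℕ} (hd : 2 ≤ d)
    (u : Fin n →₀ ℕ) (hu : mdeg u = d) :
    QuasiLinear K {v : Fin n →₀ ℕ | mdeg v = d ∧ v ≠ u} ↔ u.support.card ≠ 2 :=
  stmt_11_general u hu
end
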